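/- Let (R,V,W,S) be a Morita context with VW = R and WV = S. If R is a prime ring or S is a prime ring, then the Morita context ring T is a prime ring. -/

import Mathlib

/-- A Morita context `(R,V,W,S)`: rings `R`, `S`, an `(R,S)`-bimodule `V`,
an `(S,R)`-bimodule `W`, and context products `V × W → R`, `W × V → S`
making the `2 × 2` matrix set an associative ring. -/
structure MoritaContext (R S V W : Type*) [Ring R] [Ring S]
    [AddCommGroup V] [AddCommGroup W] : Type _ where
  smulRV : R → V → V
  smulVS : V → S → V
  smulSW : S → W → W
  smulWR : W → R → W
  mulVW : V → W → R
  mulWV : W → V → S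
  smulRV_add : ∀ r v v', smulRV r (v + v') = smulRV r v + smulRV r v'
  add_smulRV : ∀ r r' v, smulRV (r + r') v = smulRV r v + smulRV r' v
  mul_smulRV : ∀ r r' v, smulRV (r * r') v = smulRV r (smulRV r' v)
  one_smulRV : ∀ v, smulRV 1 v = v
  smulVS_add : ∀ v v' s, smulVS (v + v') s = smulVS v s + smulVS v' s
  add_smulVS : ∀ v s s', smulVS v (s + s') = smulVS v s + smulVS v s'
  mul_smulVS : ∀ v s s', smulVS v (s * s') = smulVS (smulVS v s) s'
  one_smulVS : ∀ v, smulVS v 1 = v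
  smul_assocRVS : ∀ r v s, smulVS (smulRV r v) s = smulRV r (smulVS v s)
  smulSW_add : ∀ s w w', smulSW s (w + w') = smulSW s w + smulSW s w'
  add_smulSW : ∀ s s' w, smulSW (s + s') w = smulSW s w + smulSW s' w
  mul_smulSW : ∀ s s' w, smulSW (s * s') w = smulSW s (smulSW s' w)
  one_smulSW : ∀ w, smulSW 1 w = w
  smulWR_add : ∀ w w' r, smulWR (w + w') r = smulWR w r + smulWR w' r
  add_smulWR : ∀ w r r', smulWR w (r + r') = smulWR w r + smulWR w r'
  mul_smulWR : ∀ w r r', smulWR w (r * r') = smulWR (smulWR w r) r'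
  one_smulWR : ∀ w, smulWR w 1 = w
  smul_assocSWR : ∀ s w r, smulWR (smulSW s w) r = smulSW s (smulWR w r)
  mulVW_add_left : ∀ v v' w, mulVW (v + v') w = mulVW v w + mulVW v' w
  mulVW_add_right : ∀ v w w', mulVW v (w + w') = mulVW v w + mulVW v w'
  mulWV_add_left : ∀ w w' v, mulWV (w + w') v = mulWV w v + mulWV w' v
  mulWV_add_right : ∀ w v v', mulWV w (v + v') = mulWV w v + mulWV w v'
  mulVW_smulR : ∀ r v w, mulVW (smulRV r v) w = r * mulVW v w
  mulVW_smulS : ∀ v s w, mulVW (smulVS v s) w = mulVW v (smulSW s w)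
  mulVW_smulWR : ∀ v w r, mulVW v (smulWR w r) = mulVW v w * r
  mulWV_smulS : ∀ s w v, mulWV (smulSW s w) v = s * mulWV w v
  mulWV_smulR : ∀ w r v, mulWV (smulWR w r) v = mulWV w (smulRV r v)
  mulWV_smulVS : ∀ w v s, mulWV w (smulVS v s) = mulWV w v * s
  assocVWV : ∀ v w v', smulRV (mulVW v w) v' = smulVS v (mulWV w v')
  assocWVW : ∀ w v w', smulSW (mulWV w v) w' = smulWR w (mulVW v w')

namespace MoritaContext

variable {R S V W : Type*} [Ring R] [Ring S] [AddCommGroup V] [AddCommGroup W]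
variable (M : MoritaContext R S V W)

/-- The underlying set of the Morita context ring: matrices `((r,v),(w,s))`. -/
def Mat (_ : MoritaContext R S V W) : Type _ := (R × V) × (W × S)

instance : AddCommGroup M.Mat := inferInstanceAs (AddCommGroup ((R × V) × (W × S)))


@[simp] lemma add_fst_fst (a b : M.Mat) : (a + b).1.1 = a.1.1 + b.1.1 := rfl
@[simp] lemma add_fst_snd (a b : M.Mat) : (a + b).1.2 = a.1.2 + b.1.2 := rfl
@[simp] lemma add_snd_fst (a b : M.Mat) : (a + b).2.1 = a.2.1 + b.2.1 := rfl
@[simp] lemma add_snd_snd (a b : M.Mat) : (a + b).2.2 = a.2.2 + b.2.2 := rfl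
@[simp] lemma neg_fst_fst (a : M.Mat) : (-a).1.1 = -a.1.1 := rfl
@[simp] lemma neg_fst_snd (a : M.Mat) : (-a).1.2 = -a.1.2 := rfl
@[simp] lemma neg_snd_fst (a : M.Mat) : (-a).2.1 = -a.2.1 := rfl
@[simp] lemma neg_snd_snd (a : M.Mat) : (-a).2.2 = -a.2.2 := rfl
@[simp] lemma zero_fst_fst : (0 : M.Mat).1.1 = 0 := rfl
@[simp] lemma zero_fst_snd : (0 : M.Mat).1.2 = 0 := rfl
@[simp] lemma zero_snd_fst : (0 : M.Mat).2.1 = 0 := rfl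
@[simp] lemma zero_snd_snd : (0 : M.Mat).2.2 = 0 := rfl

/-- The matrix `((r,v),(w,s))` as an element of the Morita context ring. -/
def mat (r : R) (v : V) (w : W) (s : S) : M.Mat := ((r, v), (w, s))

lemma smulRV_zero (r : R) : M.smulRV r 0 = 0 := by
  have h := M.smulRV_add r 0 0
  rw [add_zero] at h
  exact (add_eq_left.mp h.symm)

lemma zero_smulRV (v : V) : M.smulRV 0 v = 0 := by
  have h := M.add_smulRV 0 0 v
  rw [add_zero] at h
  exact (add_eq_left.mp h.symm)

lemma smulVS_zero (v : V) : M.smulVS v 0 = 0 := by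
  have h := M.add_smulVS v 0 0
  rw [add_zero] at h
  exact (add_eq_left.mp h.symm)

lemma zero_smulVS (s : S) : M.smulVS 0 s = 0 := by
  have h := M.smulVS_add 0 0 s
  rw [add_zero] at h
  exact (add_eq_left.mp h.symm)

lemma smulSW_zero (s : S) : M.smulSW s 0 = 0 := by
  have h := M.smulSW_add s 0 0
  rw [add_zero] at h
  exact (add_eq_left.mp h.symm)

lemma zero_smulSW (w : W) : M.smulSW 0 w = 0 := by
  have h := M.add_smulSW 0 0 w
  rw [add_zero] at h
  exact (add_eq_left.mp h.symm)

lemma smulWR_zero (w : W) : M.smulWR w 0 = 0 := by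
  have h := M.add_smulWR w 0 0
  rw [add_zero] at h
  exact (add_eq_left.mp h.symm)

lemma zero_smulWR (r : R) : M.smulWR 0 r = 0 := by
  have h := M.smulWR_add 0 0 r
  rw [add_zero] at h
  exact (add_eq_left.mp h.symm)

lemma mulVW_zero (v : V) : M.mulVW v 0 = 0 := by
  have h := M.mulVW_add_right v 0 0
  rw [add_zero] at h
  exact (add_eq_left.mp h.symm)

lemma zero_mulVW (w : W) : M.mulVW 0 w = 0 := by
  have h := M.mulVW_add_left 0 0 w
  rw [add_zero] at h
  exact (add_eq_left.mp h.symm)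

lemma mulWV_zero (w : W) : M.mulWV w 0 = 0 := by
  have h := M.mulWV_add_right w 0 0
  rw [add_zero] at h
  exact (add_eq_left.mp h.symm)

lemma zero_mulWV (v : V) : M.mulWV 0 v = 0 := by
  have h := M.mulWV_add_left 0 0 v
  rw [add_zero] at h
  exact (add_eq_left.mp h.symm)


lemma mat_ext {a b : M.Mat} (h1 : a.1.1 = b.1.1) (h2 : a.1.2 = b.1.2)
    (h3 : a.2.1 = b.2.1) (h4 : a.2.2 = b.2.2) : a = b :=
  Prod.ext (Prod.ext h1 h2) (Prod.ext h3 h4)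

/-- Multiplication in the Morita context ring. -/
def matMul (a b : M.Mat) : M.Mat :=
  ((a.1.1 * b.1.1 + M.mulVW a.1.2 b.2.1, M.smulRV a.1.1 b.1.2 + M.smulVS a.1.2 b.2.2),
   (M.smulWR a.2.1 b.1.1 + M.smulSW a.2.2 b.2.1, M.mulWV a.2.1 b.1.2 + a.2.2 * b.2.2))

/-- The ring structure on the Morita context matrices. -/
instance : Ring M.Mat where
  __ := (inferInstanceAs (AddCommGroup ((R × V) × (W × S))) : AddCommGroup ((R × V) × (W × S)))
  mul := M.matMul
  one := ((1, 0), (0, 1))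
  left_distrib a b c := by
    show M.matMul a (b + c) = M.matMul a b + M.matMul a c
    refine M.mat_ext ?_ ?_ ?_ ?_ <;>
      simp [matMul, M.smulRV_add, M.add_smulVS, M.smulSW_add, M.add_smulWR,
        M.mulVW_add_right, M.mulWV_add_right, mul_add] <;> (try change _ = _ + _) <;> (try dsimp only) <;> abel
  right_distrib a b c := by
    show M.matMul (a + b) c = M.matMul a c + M.matMul b c
    refine M.mat_ext ?_ ?_ ?_ ?_ <;>
      simp [matMul, M.add_smulRV, M.smulVS_add, M.add_smulSW, M.smulWR_add,
        M.mulVW_add_left, M.mulWV_add_left, add_mul] <;> (try change _ = _ + _) <;> (try dsimp only) <;> abel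
  zero_mul a := by
    show M.matMul 0 a = 0
    simp [matMul, M.zero_smulRV, M.zero_smulVS, M.zero_smulSW, M.zero_smulWR,
      M.zero_mulVW, M.zero_mulWV] <;> rfl
  mul_zero a := by
    show M.matMul a 0 = 0
    simp [matMul, M.smulRV_zero, M.smulVS_zero, M.smulSW_zero, M.smulWR_zero,
      M.mulVW_zero, M.mulWV_zero] <;> rfl
  mul_assoc a b c := by
    show M.matMul (M.matMul a b) c = M.matMul a (M.matMul b c)
    refine M.mat_ext ?_ ?_ ?_ ?_ <;>
      simp [matMul, M.smulRV_add, M.add_smulRV, M.mul_smulRV, M.smulVS_add, M.add_smulVS,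
        M.mul_smulVS, M.smul_assocRVS, M.smulSW_add, M.add_smulSW, M.mul_smulSW,
        M.smulWR_add, M.add_smulWR, M.mul_smulWR, M.smul_assocSWR,
        M.mulVW_add_left, M.mulVW_add_right, M.mulWV_add_left, M.mulWV_add_right,
        M.mulVW_smulR, M.mulVW_smulS, M.mulVW_smulWR, M.mulWV_smulS, M.mulWV_smulR,
        M.mulWV_smulVS, M.assocVWV, M.assocWVW, mul_add, add_mul, mul_assoc] <;> (try change _ = _ + _) <;> (try dsimp only) <;> abel
  one_mul a := by
    show M.matMul ((1, 0), (0, 1)) a = a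
    simp [matMul, M.one_smulRV, M.one_smulSW, M.zero_smulVS, M.zero_smulWR,
      M.zero_mulVW, M.zero_mulWV] <;> rfl
  mul_one a := by
    show M.matMul a ((1, 0), (0, 1)) = a
    simp [matMul, M.one_smulVS, M.one_smulWR, M.smulRV_zero, M.smulSW_zero,
      M.mulVW_zero, M.mulWV_zero] <;> rfl

/-- The "rectangular" subset `(I, V₁, W₁, J)` of the Morita context ring. -/
def rect (I : Set R) (V₁ : Set V) (W₁ : Set W) (J : Set S) : Set M.Mat :=
  {t | t.1.1 ∈ I ∧ t.1.2 ∈ V₁ ∧ t.2.1 ∈ W₁ ∧ t.2.2 ∈ J}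

end MoritaContext

/-- A subset of a ring is a right ideal. -/
def IsRightIdealSet {A : Type*} [Ring A] (U : Set A) : Prop :=
  (0 : A) ∈ U ∧ (∀ a ∈ U, ∀ b ∈ U, a + b ∈ U) ∧ (∀ a ∈ U, -a ∈ U) ∧
    ∀ a ∈ U, ∀ t : A, a * t ∈ U

/-- A subset of a ring is a two-sided ideal. -/
def IsIdealSet {A : Type*} [Ring A] (U : Set A) : Prop :=
  (0 : A) ∈ U ∧ (∀ a ∈ U, ∀ b ∈ U, a + b ∈ U) ∧ (∀ a ∈ U, -a ∈ U) ∧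
    (∀ a ∈ U, ∀ t : A, a * t ∈ U) ∧ ∀ a ∈ U, ∀ t : A, t * a ∈ U

/-- A proper two-sided ideal `U` is prime if `aAb ⊆ U` implies `a ∈ U` or `b ∈ U`. -/
def IsPrimeIdealSet {A : Type*} [Ring A] (U : Set A) : Prop :=
  IsIdealSet U ∧ U ≠ Set.univ ∧ ∀ a b : A, (∀ x : A, a * x * b ∈ U) → a ∈ U ∨ b ∈ U

/-- A proper two-sided ideal `U` is semiprime if `aAa ⊆ U` implies `a ∈ U`. -/
def IsSemiprimeIdealSet {A : Type*} [Ring A] (U : Set A) : Prop :=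
  IsIdealSet U ∧ U ≠ Set.univ ∧ ∀ a : A, (∀ x : A, a * x * a ∈ U) → a ∈ U

/-- A proper right ideal `U` is prime if `aAb ⊆ U` implies `a ∈ U` or `b ∈ U`. -/
def IsPrimeRightIdealSet {A : Type*} [Ring A] (U : Set A) : Prop :=
  IsRightIdealSet U ∧ U ≠ Set.univ ∧ ∀ a b : A, (∀ x : A, a * x * b ∈ U) → a ∈ U ∨ b ∈ U

/-- The prime radical of a ring: the intersection of all its prime ideals. -/
def primeRadicalSet (A : Type*) [Ring A] : Set A := ⋂₀ {U | IsPrimeIdealSet U}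

/-- A ring `A` is prime if `aAb = 0` implies `a = 0` or `b = 0`. -/
def IsPrimeRing (A : Type*) [Ring A] : Prop :=
  ∀ a b : A, (∀ x : A, a * x * b = 0) → a = 0 ∨ b = 0

/-- A ring `A` is semiprime if `aAa = 0` implies `a = 0`. -/
def IsSemiprimeRing (A : Type*) [Ring A] : Prop :=
  ∀ a : A, (∀ x : A, a * x * a = 0) → a = 0

/-- The Morita context `(A,A,A,A)` over a commutative ring with all products
given by multiplication in `A`. -/
def MoritaContext.ofComm (A : Type*) [CommRing A] : MoritaContext A A A A := by
  refine ⟨(· * ·), (· * ·), (· * ·), (· * ·), (· * ·), (· * ·), ?_, ?_, ?_, ?_, ?_, ?_, ?_, ?_, ?_, ?_, ?_, ?_, ?_, ?_, ?_, ?_, ?_, ?_, ?_, ?_, ?_, ?_, ?_, ?_, ?_, ?_, ?_, ?_, ?_, ?_⟩ <;>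
    intros <;> ring

/-- The Morita context `(A, I, J, A)` over a commutative ring `A` with ideals
`I`, `J`, all products given by multiplication in `A`. -/
def MoritaContext.ofIdeals (A : Type*) [CommRing A] (I J : Ideal A) :
    MoritaContext A A I J := by
  refine ⟨fun r v => ⟨r * v.1, I.mul_mem_left r v.2⟩,
    fun v s => ⟨v.1 * s, I.mul_mem_right s v.2⟩,
    fun s w => ⟨s * w.1, J.mul_mem_left s w.2⟩,
    fun w r => ⟨w.1 * r, J.mul_mem_right r w.2⟩,
    fun v w => v.1 * w.1, fun w v => w.1 * v.1, ?_, ?_, ?_, ?_, ?_, ?_, ?_, ?_, ?_, ?_, ?_, ?_, ?_, ?_, ?_, ?_, ?_, ?_, ?_, ?_, ?_, ?_, ?_, ?_, ?_, ?_, ?_, ?_, ?_, ?_⟩ <;>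
    intros <;> first
      | (apply Subtype.ext; push_cast; ring)
      | (push_cast; ring)


/-! The `(1,1)` corner detects every element of the Morita ring `T` once `WV = S`: if
`(x c y)₁₁ = 0` for all `x, y ∈ T`, then every entry of `c` is killed by `V` or `W` on the
appropriate side, and `1 ∈ WV` forces it to vanish. Now let `aTb = 0` with `a ≠ 0`, and pick
`x, y` with `(x a y)₁₁ ≠ 0`. For all `u, v` and `r ∈ R`, the product `(x a y)₁₁ r (u b v)₁₁` is
the `(1,1)` entry of `x a (y E u) b v = 0`, where `E` is the matrix with `r` in the corner; so
primeness of `R` gives `(u b v)₁₁ = 0`, hence `b = 0`. The case of a prime `S` is the same one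
for the context with the roles of `(R, V)` and `(S, W)` exchanged. -/

theorem IsPrimeRing.of_corner {T A : Type*} [Ring T] [Ring A] (hA : IsPrimeRing A) (π : T → A)
    (hπ0 : π 0 = 0) (hπ : ∀ a b r, ∃ t, π (a * t * b) = π a * r * π b)
    (hfaithful : ∀ c, (∀ x y, π (x * c * y) = 0) → c = 0) : IsPrimeRing T := by
  intro a b hab
  by_cases ha : a = 0
  · exact Or.inl ha
  obtain ⟨x, y, hxy⟩ : ∃ x y, π (x * a * y) ≠ 0 := by
    by_contra! h
    exact ha (hfaithful a h)
  refine Or.inr (hfaithful b fun u v => (hA _ _ fun r => ?_).resolve_left hxy)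
  obtain ⟨t, ht⟩ := hπ (x * a * y) (u * b * v) r
  rw [← ht, show x * a * y * t * (u * b * v) = x * (a * (y * t * u) * b) * v by noncomm_ring,
    hab, mul_zero, zero_mul, hπ0]

theorem IsPrimeRing.of_ringEquiv {A B : Type*} [Ring A] [Ring B] (hA : IsPrimeRing A)
    (e : A ≃+* B) : IsPrimeRing B := by
  intro a b hab
  simpa using hA (e.symm a) (e.symm b) fun x => by simpa using congrArg e.symm (hab (e x))

namespace MoritaContext

variable {R S V W : Type*} [Ring R] [Ring S] [AddCommGroup V] [AddCommGroup W]
  (M : MoritaContext R S V W)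

attribute [simp] smulRV_zero zero_smulRV smulVS_zero zero_smulVS smulSW_zero zero_smulSW
  smulWR_zero zero_smulWR mulVW_zero zero_mulVW mulWV_zero zero_mulWV

@[simp] lemma mat_fst_fst (r : R) (v : V) (w : W) (s : S) : (M.mat r v w s).1.1 = r := rfl
@[simp] lemma mat_fst_snd (r : R) (v : V) (w : W) (s : S) : (M.mat r v w s).1.2 = v := rfl
@[simp] lemma mat_snd_fst (r : R) (v : V) (w : W) (s : S) : (M.mat r v w s).2.1 = w := rfl
@[simp] lemma mat_snd_snd (r : R) (v : V) (w : W) (s : S) : (M.mat r v w s).2.2 = s := rfl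

@[simp] lemma one_fst_fst : (1 : M.Mat).1.1 = 1 := rfl
@[simp] lemma one_fst_snd : (1 : M.Mat).1.2 = 0 := rfl
@[simp] lemma one_snd_fst : (1 : M.Mat).2.1 = 0 := rfl
@[simp] lemma one_snd_snd : (1 : M.Mat).2.2 = 1 := rfl

@[simp] lemma mul_fst_fst (a b : M.Mat) :
    (a * b).1.1 = a.1.1 * b.1.1 + M.mulVW a.1.2 b.2.1 := rfl
@[simp] lemma mul_fst_snd (a b : M.Mat) :
    (a * b).1.2 = M.smulRV a.1.1 b.1.2 + M.smulVS a.1.2 b.2.2 := rfl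
@[simp] lemma mul_snd_fst (a b : M.Mat) :
    (a * b).2.1 = M.smulWR a.2.1 b.1.1 + M.smulSW a.2.2 b.2.1 := rfl
@[simp] lemma mul_snd_snd (a b : M.Mat) :
    (a * b).2.2 = M.mulWV a.2.1 b.1.2 + a.2.2 * b.2.2 := rfl

def swap : MoritaContext S R W V where
  smulRV := M.smulSW
  smulVS := M.smulWR
  smulSW := M.smulRV
  smulWR := M.smulVS
  mulVW := M.mulWV
  mulWV := M.mulVW
  smulRV_add := M.smulSW_add
  add_smulRV := M.add_smulSW
  mul_smulRV := M.mul_smulSW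
  one_smulRV := M.one_smulSW
  smulVS_add := M.smulWR_add
  add_smulVS := M.add_smulWR
  mul_smulVS := M.mul_smulWR
  one_smulVS := M.one_smulWR
  smul_assocRVS := M.smul_assocSWR
  smulSW_add := M.smulRV_add
  add_smulSW := M.add_smulRV
  mul_smulSW := M.mul_smulRV
  one_smulSW := M.one_smulRV
  smulWR_add := M.smulVS_add
  add_smulWR := M.add_smulVS
  mul_smulWR := M.mul_smulVS
  one_smulWR := M.one_smulVS
  smul_assocSWR := M.smul_assocRVS
  mulVW_add_left := M.mulWV_add_left
  mulVW_add_right := M.mulWV_add_right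
  mulWV_add_left := M.mulVW_add_left
  mulWV_add_right := M.mulVW_add_right
  mulVW_smulR := M.mulWV_smulS
  mulVW_smulS := M.mulWV_smulR
  mulVW_smulWR := M.mulWV_smulVS
  mulWV_smulS := M.mulVW_smulR
  mulWV_smulR := M.mulVW_smulS
  mulWV_smulVS := M.mulVW_smulWR
  assocVWV := M.assocWVW
  assocWVW := M.assocVWV

def swapMatEquiv : M.swap.Mat ≃+* M.Mat where
  toFun c := M.mat c.2.2 c.2.1 c.1.2 c.1.1
  invFun c := M.swap.mat c.2.2 c.2.1 c.1.2 c.1.1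
  left_inv _ := rfl
  right_inv _ := rfl
  map_mul' _ _ := M.mat_ext (add_comm _ _) (add_comm _ _) (add_comm _ _) (add_comm _ _)
  map_add' _ _ := rfl

section FullWV

variable {M}

lemma map_one_eq_zero_of_map_mulWV_eq_zero
    (hWV : AddSubgroup.closure {x : S | ∃ (w : W) (v : V), x = M.mulWV w v} = ⊤)
    {X : Type*} [AddGroup X] (f : S →+ X) (hf : ∀ w v, f (M.mulWV w v) = 0) : f 1 = 0 :=
  DFunLike.congr_fun (AddMonoidHom.eq_of_eqOn_dense hWV (g := 0) <| by
    rintro _ ⟨w, v, rfl⟩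
    exact hf w v) 1

lemma eq_zero_of_forall_mulVW_right_eq_zero
    (hWV : AddSubgroup.closure {x : S | ∃ (w : W) (v : V), x = M.mulWV w v} = ⊤)
    {v : V} (h : ∀ w, M.mulVW v w = 0) : v = 0 := by
  simpa [M.one_smulVS] using map_one_eq_zero_of_map_mulWV_eq_zero hWV
    (AddMonoidHom.mk' (M.smulVS v) (M.add_smulVS v))
    fun w v' => by simp [← M.assocVWV, h]

lemma eq_zero_of_forall_mulVW_left_eq_zero
    (hWV : AddSubgroup.closure {x : S | ∃ (w : W) (v : V), x = M.mulWV w v} = ⊤)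
    {w : W} (h : ∀ v, M.mulVW v w = 0) : w = 0 := by
  simpa [M.one_smulSW] using map_one_eq_zero_of_map_mulWV_eq_zero hWV
    (AddMonoidHom.mk' (M.smulSW · w) (M.add_smulSW · · w))
    fun w' v => by simp [M.assocWVW, h]

lemma eq_zero_of_forall_smulVS_eq_zero
    (hWV : AddSubgroup.closure {x : S | ∃ (w : W) (v : V), x = M.mulWV w v} = ⊤)
    {s : S} (h : ∀ v, M.smulVS v s = 0) : s = 0 := by
  simpa using map_one_eq_zero_of_map_mulWV_eq_zero hWV
    (AddMonoidHom.mk' (· * s) (add_mul · · s))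
    fun w v => by simp [← M.mulWV_smulVS, h]

lemma eq_zero_of_forall_mul_mul_fst_fst_eq_zero
    (hWV : AddSubgroup.closure {x : S | ∃ (w : W) (v : V), x = M.mulWV w v} = ⊤)
    {c : M.Mat} (h : ∀ x y : M.Mat, (x * c * y).1.1 = 0) : c = 0 := by
  refine M.mat_ext ?_ ?_ ?_ ?_
  · show c.1.1 = 0
    simpa using h 1 1
  · exact eq_zero_of_forall_mulVW_right_eq_zero hWV fun w => by simpa using h 1 (M.mat 0 0 w 0)
  · exact eq_zero_of_forall_mulVW_left_eq_zero hWV fun v => by simpa using h (M.mat 0 v 0 0) 1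
  · refine eq_zero_of_forall_smulVS_eq_zero hWV fun v =>
      eq_zero_of_forall_mulVW_right_eq_zero hWV fun w => ?_
    simpa using h (M.mat 0 v 0 0) (M.mat 0 0 w 0)

end FullWV

theorem isPrimeRing_mat_of_isPrimeRing_left
    (hWV : AddSubgroup.closure {x : S | ∃ (w : W) (v : V), x = M.mulWV w v} = ⊤)
    (hR : IsPrimeRing R) : IsPrimeRing M.Mat :=
  hR.of_corner (fun c => c.1.1) rfl
    (fun a b r => ⟨M.mat r 0 0 0, by simp⟩)
    fun _ => eq_zero_of_forall_mul_mul_fst_fst_eq_zero hWV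

theorem isPrimeRing_mat_of_isPrimeRing_right
    (hVW : AddSubgroup.closure {x : R | ∃ (v : V) (w : W), x = M.mulVW v w} = ⊤)
    (hS : IsPrimeRing S) : IsPrimeRing M.Mat :=
  (M.swap.isPrimeRing_mat_of_isPrimeRing_left hVW hS).of_ringEquiv M.swapMatEquiv

end MoritaContext

variable {R S V W : Type*} [Ring R] [Ring S] [AddCommGroup V] [AddCommGroup W]

/-- Theorem 2.13, (4) ⇒ (1): if `VW = R`, `WV = S` and `R` or `S` is a prime
ring, then the Morita context ring is prime. -/
theorem stmt17 (M : MoritaContext R S V W)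
    (hVW : AddSubgroup.closure {x : R | ∃ (v : V) (w : W), x = M.mulVW v w} = ⊤)
    (hWV : AddSubgroup.closure {x : S | ∃ (w : W) (v : V), x = M.mulWV w v} = ⊤)
    (h : IsPrimeRing R ∨ IsPrimeRing S) :
    IsPrimeRing M.Mat :=
  h.elim (M.isPrimeRing_mat_of_isPrimeRing_left hWV) (M.isPrimeRing_mat_of_isPrimeRing_right hVW)
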